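/- arXiv:1008.3650 — 3 statements merged into one kernel-verified Lean document; each statement's English description precedes it below -/
import Mathlib

section
/- Let τ be any stopping time with t ≤ τ ≤ T a.s. Then E^{Q̃}[e^{−rτ} c_τ | F_t] = E^{Q̃}[e^{−rτ} p_τ | F_t] + e^{−rt} S_t − K e^{−rT} almost surely. Consequently, a stopping time τ* valued in [t,T] minimizes τ ↦ E^{Q̃}[e^{−rτ} c_τ] over all such stopping times if and only if it minimizes τ ↦ E^{Q̃}[e^{−rτ} p_τ]; i.e., the buyer's optimal purchase strategies for a European call and a European put with the same underlying, strike and maturity are identical. -/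
/-!
Multiplying the parity relation at the random time `τ` by `e^{-rτ}` gives, pathwise,
`e^{-rτ} c_τ = e^{-rτ} p_τ + e^{-rτ} S_τ - K e^{-rT}`; the strike term no longer depends
on `τ`.
Conditioning on `F_t` and applying optional sampling to the discounted stock turns
`e^{-rτ} S_τ` into `e^{-rt} S_t`, so the discounted call and put values at `τ` differ by a
quantity independent of `τ`, and the two stopping problems share their minimizers.
-/

open MeasureTheory Filter Set

theorem discounted_call_eq_of_parity {r T K u c p s : ℝ}
    (h : c - p = s - K * Real.exp (-(r * (T - u)))) :
    Real.exp (-(r * u)) * c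
      = Real.exp (-(r * u)) * p + (Real.exp (-(r * u)) * s - K * Real.exp (-(r * T))) := by
  have hexp : Real.exp (-(r * u)) * Real.exp (-(r * (T - u))) = Real.exp (-(r * T)) := by
    rw [← Real.exp_add]; ring_nf
  linear_combination Real.exp (-(r * u)) * h - K * hexp

section

variable {Ω : Type*} {m m0 : MeasurableSpace Ω} {μ : Measure Ω}

theorem discounted_call_ae_eq_of_parity {r T K : ℝ} {s : Set ℝ} {S c p : ℝ → Ω → ℝ}
    {τ : Ω → ℝ}
    (parity : ∀ᵐ ω ∂μ, ∀ u ∈ s,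
      c u ω - p u ω = S u ω - K * Real.exp (-(r * (T - u))))
    (hτ : ∀ ω, τ ω ∈ s) :
    (fun ω => Real.exp (-(r * τ ω)) * c (τ ω) ω) =ᵐ[μ] fun ω =>
      Real.exp (-(r * τ ω)) * p (τ ω) ω
        + (Real.exp (-(r * τ ω)) * S (τ ω) ω - K * Real.exp (-(r * T))) := by
  filter_upwards [parity] with ω hω
  exact discounted_call_eq_of_parity (hω (τ ω) (hτ ω))

theorem condExp_ae_eq_add_sub_const [IsFiniteMeasure μ] (hm : m ≤ m0) {X Y Z : Ω → ℝ}
    {C : ℝ}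
    (hY : Integrable Y μ) (hZ : Integrable Z μ) (hX : X =ᵐ[μ] fun ω => Y ω + (Z ω - C)) :
    μ[X | m] =ᵐ[μ] fun ω => μ[Y | m] ω + (μ[Z | m] ω - C) := by
  have hZC : Integrable (fun ω => Z ω - C) μ := hZ.sub (integrable_const C)
  have hsub : μ[fun ω => Z ω - C | m] =ᵐ[μ] fun ω => μ[Z | m] ω - C := by
    filter_upwards [condExp_sub hZ (integrable_const C) m] with ω hω
    rw [Pi.sub_apply, condExp_const hm] at hω
    exact hω
  calc μ[X | m] =ᵐ[μ] μ[fun ω => Y ω + (Z ω - C) | m] := condExp_congr_ae hX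
    _ =ᵐ[μ] μ[Y | m] + μ[fun ω => Z ω - C | m] := condExp_add hY hZC m
    _ =ᵐ[μ] fun ω => μ[Y | m] ω + (μ[Z | m] ω - C) := EventuallyEq.rfl.add hsub

theorem integral_eq_add_sub_const [IsProbabilityMeasure μ] {X Y Z : Ω → ℝ} {C : ℝ}
    (hY : Integrable Y μ) (hZ : Integrable Z μ) (hX : X =ᵐ[μ] fun ω => Y ω + (Z ω - C)) :
    ∫ ω, X ω ∂μ = ∫ ω, Y ω ∂μ + (∫ ω, Z ω ∂μ - C) := by
  have hZC : Integrable (fun ω => Z ω - C) μ := hZ.sub (integrable_const C)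
  rw [integral_congr_ae hX, integral_add hY hZC, integral_sub hZ (integrable_const C),
    integral_const, probReal_univ, one_smul]

theorem integral_eq_of_condExp_ae_eq [IsFiniteMeasure μ] (hm : m ≤ m0) {f g : Ω → ℝ}
    (h : μ[f | m] =ᵐ[μ] g) : ∫ ω, f ω ∂μ = ∫ ω, g ω ∂μ := by
  rw [← integral_condExp hm, integral_congr_ae h]

end

theorem optimal_purchase_put_call_parity_general
    {Ω : Type*} {m0 : MeasurableSpace Ω} (μ : Measure Ω) [IsProbabilityMeasure μ]
    (ℱ : Filtration ℝ m0) (T r K t : ℝ)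
    (ht : t ∈ Set.Icc (0 : ℝ) T)
    (S c p : ℝ → Ω → ℝ)
    (parity : ∀ᵐ ω ∂μ, ∀ u ∈ Set.Icc (0 : ℝ) T,
      c u ω - p u ω = S u ω - K * Real.exp (-(r * (T - u))))
    (hS : ∀ τ : Ω → ℝ, IsStoppingTime ℱ (fun ω => (τ ω : WithTop ℝ)) → (∀ ω, τ ω ∈ Set.Icc t T) →
      μ[fun ω => Real.exp (-(r * τ ω)) * S (τ ω) ω | ℱ t]
        =ᵐ[μ] fun ω => Real.exp (-(r * t)) * S t ω)
    (hSint : ∀ τ : Ω → ℝ, IsStoppingTime ℱ (fun ω => (τ ω : WithTop ℝ)) → (∀ ω, τ ω ∈ Set.Icc t T) →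
      Integrable (fun ω => Real.exp (-(r * τ ω)) * S (τ ω) ω) μ)
    (hpint : ∀ τ : Ω → ℝ, IsStoppingTime ℱ (fun ω => (τ ω : WithTop ℝ)) → (∀ ω, τ ω ∈ Set.Icc t T) →
      Integrable (fun ω => Real.exp (-(r * τ ω)) * p (τ ω) ω) μ) :
    (∀ τ : Ω → ℝ, IsStoppingTime ℱ (fun ω => (τ ω : WithTop ℝ)) → (∀ ω, τ ω ∈ Set.Icc t T) →
      μ[fun ω => Real.exp (-(r * τ ω)) * c (τ ω) ω | ℱ t]
        =ᵐ[μ] fun ω =>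
          (μ[fun ω' => Real.exp (-(r * τ ω')) * p (τ ω') ω' | ℱ t]) ω
            + Real.exp (-(r * t)) * S t ω - K * Real.exp (-(r * T)))
    ∧ (∀ τstar : Ω → ℝ, IsStoppingTime ℱ (fun ω => (τstar ω : WithTop ℝ)) → (∀ ω, τstar ω ∈ Set.Icc t T) →
        ((∀ τ : Ω → ℝ, IsStoppingTime ℱ (fun ω => (τ ω : WithTop ℝ)) → (∀ ω, τ ω ∈ Set.Icc t T) →
            ∫ ω, Real.exp (-(r * τstar ω)) * c (τstar ω) ω ∂μ
              ≤ ∫ ω, Real.exp (-(r * τ ω)) * c (τ ω) ω ∂μ)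
          ↔ (∀ τ : Ω → ℝ, IsStoppingTime ℱ (fun ω => (τ ω : WithTop ℝ)) → (∀ ω, τ ω ∈ Set.Icc t T) →
            ∫ ω, Real.exp (-(r * τstar ω)) * p (τstar ω) ω ∂μ
              ≤ ∫ ω, Real.exp (-(r * τ ω)) * p (τ ω) ω ∂μ))) := by
  have hdecomp : ∀ τ : Ω → ℝ, (∀ ω, τ ω ∈ Set.Icc t T) →
      (fun ω => Real.exp (-(r * τ ω)) * c (τ ω) ω) =ᵐ[μ] fun ω =>
        Real.exp (-(r * τ ω)) * p (τ ω) ω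
          + (Real.exp (-(r * τ ω)) * S (τ ω) ω - K * Real.exp (-(r * T))) :=
    fun τ hτ => discounted_call_ae_eq_of_parity parity fun ω => Icc_subset_Icc_left ht.1 (hτ ω)
  refine ⟨fun τ hst hτ => ?_, fun τstar hstar hτstar => ?_⟩
  · filter_upwards [condExp_ae_eq_add_sub_const (ℱ.le t) (hpint τ hst hτ) (hSint τ hst hτ)
      (hdecomp τ hτ), hS τ hst hτ] with ω hcω hSω
    rw [hcω, hSω]
    ring
  · have hvalue : ∀ τ : Ω → ℝ, IsStoppingTime ℱ (fun ω => (τ ω : WithTop ℝ)) →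
        (∀ ω, τ ω ∈ Set.Icc t T) →
        ∫ ω, Real.exp (-(r * τ ω)) * c (τ ω) ω ∂μ
          = ∫ ω, Real.exp (-(r * τ ω)) * p (τ ω) ω ∂μ
            + (∫ ω, Real.exp (-(r * t)) * S t ω ∂μ - K * Real.exp (-(r * T))) := by
      intro τ hst hτ
      rw [integral_eq_add_sub_const (hpint τ hst hτ) (hSint τ hst hτ) (hdecomp τ hτ),
        integral_eq_of_condExp_ae_eq (ℱ.le t) (hS τ hst hτ)]
    refine forall₃_congr fun τ hst hτ => ?_
    rw [hvalue τstar hstar hτstar, hvalue τ hst hτ, add_le_add_iff_right]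

/-- **Put–call parity for the purchase-timing problem (Proposition 2.1).**
On a filtered probability space `(Ω, F, (F_t), Q̃)`, let `S` be a stock whose
discounted value is a `Q̃`-martingale (expressed through the optional sampling
identity `E^{Q̃}[e^{−rτ} S_τ | F_t] = e^{−rt} S_t` for stopping times
`t ≤ τ ≤ T`), and let `c`, `p` be call and put price processes satisfying the
model-free put–call parity `c_u − p_u = S_u − K e^{−r(T−u)}`.  Then for every
stopping time `τ` with `t ≤ τ ≤ T`,
`E^{Q̃}[e^{−rτ} c_τ | F_t] = E^{Q̃}[e^{−rτ} p_τ | F_t] + e^{−rt} S_t − K e^{−rT}`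
a.s.; consequently a stopping time `τ*` valued in `[t,T]` minimizes
`τ ↦ E^{Q̃}[e^{−rτ} c_τ]` over all such stopping times iff it minimizes
`τ ↦ E^{Q̃}[e^{−rτ} p_τ]`: the buyer's optimal purchase strategies for a
European call and a European put with the same underlying, strike and maturity
are identical. -/
theorem optimal_purchase_put_call_parity
    {Ω : Type*} {m0 : MeasurableSpace Ω} (μ : Measure Ω) [IsProbabilityMeasure μ]
    (ℱ : Filtration ℝ m0) (T r K t : ℝ)
    (hT : 0 < T) (hr : 0 ≤ r) (hK : 0 < K) (ht : t ∈ Set.Icc (0 : ℝ) T)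
    (S c p : ℝ → Ω → ℝ)
    (parity : ∀ᵐ ω ∂μ, ∀ u ∈ Set.Icc (0 : ℝ) T,
      c u ω - p u ω = S u ω - K * Real.exp (-(r * (T - u))))
    (hS : ∀ τ : Ω → ℝ, IsStoppingTime ℱ (fun ω => (τ ω : WithTop ℝ)) → (∀ ω, τ ω ∈ Set.Icc t T) →
      μ[fun ω => Real.exp (-(r * τ ω)) * S (τ ω) ω | ℱ t]
        =ᵐ[μ] fun ω => Real.exp (-(r * t)) * S t ω)
    (hSint : ∀ τ : Ω → ℝ, IsStoppingTime ℱ (fun ω => (τ ω : WithTop ℝ)) → (∀ ω, τ ω ∈ Set.Icc t T) →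
      Integrable (fun ω => Real.exp (-(r * τ ω)) * S (τ ω) ω) μ)
    (hcint : ∀ τ : Ω → ℝ, IsStoppingTime ℱ (fun ω => (τ ω : WithTop ℝ)) → (∀ ω, τ ω ∈ Set.Icc t T) →
      Integrable (fun ω => Real.exp (-(r * τ ω)) * c (τ ω) ω) μ)
    (hpint : ∀ τ : Ω → ℝ, IsStoppingTime ℱ (fun ω => (τ ω : WithTop ℝ)) → (∀ ω, τ ω ∈ Set.Icc t T) →
      Integrable (fun ω => Real.exp (-(r * τ ω)) * p (τ ω) ω) μ) :
    (∀ τ : Ω → ℝ, IsStoppingTime ℱ (fun ω => (τ ω : WithTop ℝ)) → (∀ ω, τ ω ∈ Set.Icc t T) →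
      μ[fun ω => Real.exp (-(r * τ ω)) * c (τ ω) ω | ℱ t]
        =ᵐ[μ] fun ω =>
          (μ[fun ω' => Real.exp (-(r * τ ω')) * p (τ ω') ω' | ℱ t]) ω
            + Real.exp (-(r * t)) * S t ω - K * Real.exp (-(r * T)))
    ∧ (∀ τstar : Ω → ℝ, IsStoppingTime ℱ (fun ω => (τstar ω : WithTop ℝ)) → (∀ ω, τstar ω ∈ Set.Icc t T) →
        ((∀ τ : Ω → ℝ, IsStoppingTime ℱ (fun ω => (τ ω : WithTop ℝ)) → (∀ ω, τ ω ∈ Set.Icc t T) →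
            ∫ ω, Real.exp (-(r * τstar ω)) * c (τstar ω) ω ∂μ
              ≤ ∫ ω, Real.exp (-(r * τ ω)) * c (τ ω) ω ∂μ)
          ↔ (∀ τ : Ω → ℝ, IsStoppingTime ℱ (fun ω => (τ ω : WithTop ℝ)) → (∀ ω, τ ω ∈ Set.Icc t T) →
            ∫ ω, Real.exp (-(r * τstar ω)) * p (τstar ω) ω ∂μ
              ≤ ∫ ω, Real.exp (-(r * τ ω)) * p (τ ω) ω ∂μ))) :=
  optimal_purchase_put_call_parity_general μ ℱ T r K t ht S c p parity hS hSint hpint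
end

section
/- For every stopping time τ with values in [0,T], the concatenated process Z^τ_t := Z^b_t·1_{[0,τ)}(t) + (Z^m_t · Z^b_τ / Z^m_τ)·1_{[τ,T]}(t), 0 ≤ t ≤ T, is a strictly positive martingale with respect to (F_t) under P, with Z^τ_0 = Z^b_0. -/
/-!
Put `R_t = Z^b_{τ∧t} / Z^m_{τ∧t}`; it is `F_{τ∧t}`-measurable and `Z^τ_t = Z^m_t R_t` almost
surely. Fix `s ≤ t` and `A ∈ F_s`, and split `A` along `{τ ≤ s}`. On `A ∩ {τ ≤ s}` we have
`R_t = R_s`, which is `F_s`-measurable, so the martingale property of `Z^m` gives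
`∫ Z^τ_t = ∫ Z^τ_s` there. The set `A ∩ {τ > s}` belongs to `F_{τ∧t}`, where optional sampling for
`Z^m` and `Z^b` gives `∫ Z^m_t R_t = ∫ Z^m_{τ∧t} R_t = ∫ Z^b_{τ∧t} = ∫ Z^b_t`; since `Z^τ_s = Z^b_s`
on this set, the martingale property of `Z^b` concludes. The stopped values are measurable because
right-continuous adapted processes are progressively measurable.
-/

open MeasureTheory Filter Set

/-- The concatenation of the density processes `Z^b` and `Z^m` at the stopping
time `τ`:  `Z^τ_t = Z^b_t·1_{[0,τ)}(t) + (Z^m_t · Z^b_τ / Z^m_τ)·1_{[τ,T]}(t)`. -/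
noncomputable def concatDensity {Ω : Type*} (Zm Zb : ℝ → Ω → ℝ) (τ : Ω → ℝ) :
    ℝ → Ω → ℝ :=
  fun u ω => if u < τ ω then Zb u ω else Zm u ω * Zb (τ ω) ω / Zm (τ ω) ω

open Topology TopologicalSpace

section

variable {Ω : Type*} {m0 : MeasurableSpace Ω}

lemma tendsto_sub_natFloor_div_pow_nhdsGE {i t : ℝ} (ht : t ≤ i) :
    Tendsto (fun n : ℕ => i - ⌊(i - t) * 2 ^ n⌋₊ / 2 ^ n) atTop (𝓝[≥] t) := by
  have hpos (n : ℕ) : (0 : ℝ) < 2 ^ n := by positivity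
  have hlower (n : ℕ) : t ≤ i - ⌊(i - t) * 2 ^ n⌋₊ / 2 ^ n := by
    rw [le_sub_comm, div_le_iff₀ (hpos n)]
    exact Nat.floor_le (mul_nonneg (sub_nonneg.2 ht) (hpos n).le)
  have hupper (n : ℕ) : i - ⌊(i - t) * 2 ^ n⌋₊ / 2 ^ n ≤ t + (1 / 2) ^ n := by
    rw [sub_le_comm, le_div_iff₀ (hpos n), sub_mul, add_mul, div_pow, one_pow,
      one_div_mul_cancel (hpos n).ne']
    linarith [Nat.lt_floor_add_one ((i - t) * 2 ^ n)]
  have hlim : Tendsto (fun n : ℕ => t + (1 / 2 : ℝ) ^ n) atTop (𝓝 t) := by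
    simpa using tendsto_const_nhds.add
      (tendsto_pow_atTop_nhds_zero_of_lt_one (by norm_num : (0 : ℝ) ≤ 1 / 2) (by norm_num))
  exact tendsto_nhdsWithin_iff.2
    ⟨tendsto_of_tendsto_of_tendsto_of_le_of_le tendsto_const_nhds hlim hlower hupper,
      Eventually.of_forall hlower⟩

theorem MeasureTheory.Adapted.isProgressive_of_continuousWithinAt_Ici {β : Type*}
    [TopologicalSpace β] [PseudoMetrizableSpace β] [MeasurableSpace β] [BorelSpace β]
    {ℱ : Filtration ℝ m0} {u : ℝ → Ω → β} (hu : Adapted ℱ u)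
    (hrc : ∀ ω t, ContinuousWithinAt (fun v => u v ω) (Ici t) t) :
    IsProgressive ℱ u := by
  intro i
  -- `u t` is the limit of `u` at the first point of the grid `i - 2⁻ⁿ ℕ` at or after `t`
  have hfloor (n : ℕ) : @Measurable _ _ (Subtype.instMeasurableSpace.prod (ℱ i))
      (Nat.instMeasurableSpace.prod (ℱ i)) fun p : Iic i × Ω => (⌊(i - p.1) * 2 ^ n⌋₊, p.2) := by
    refine Measurable.prodMk (Nat.measurable_floor.comp (Measurable.mul_const ?_ _))
      (@measurable_snd _ _ Subtype.instMeasurableSpace (ℱ i))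
    exact measurable_const.sub (measurable_subtype_coe.comp measurable_fst)
  have hgrid (n : ℕ) : Measurable[Nat.instMeasurableSpace.prod (ℱ i)]
      fun q : ℕ × Ω => u (i - q.1 / 2 ^ n) q.2 :=
    measurable_from_prod_countable_right fun k =>
      (hu _).mono (ℱ.mono (sub_le_self _ (div_nonneg k.cast_nonneg (by positivity)))) le_rfl
  refine @measurable_of_tendsto_metrizable _ _ (Subtype.instMeasurableSpace.prod (ℱ i)) _ _ _ _
    _ _ (fun n => (hgrid n).comp (hfloor n)) (tendsto_pi_nhds.2 fun p => ?_)
  exact (hrc p.2 p.1).tendsto.comp (tendsto_sub_natFloor_div_pow_nhdsGE p.1.2)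

theorem MeasureTheory.IsStoppingTime.measurableSet_of_subset_const_le {ι : Type*} [Preorder ι]
    {ℱ : Filtration ι m0} {τ : Ω → WithTop ι} (hτ : IsStoppingTime ℱ τ) {s : ι} {A : Set Ω}
    (hA : MeasurableSet[ℱ s] A) (hAτ : A ⊆ {ω | (s : WithTop ι) ≤ τ ω}) :
    MeasurableSet[hτ.measurableSpace] A := by
  refine ⟨le_iSup (fun i => ℱ i) s A hA, fun i => ?_⟩
  by_cases hsi : s ≤ i
  · exact (ℱ.mono hsi A hA).inter (hτ.measurableSet_le i)
  · convert @MeasurableSet.empty _ (ℱ i)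
    refine eq_empty_of_forall_notMem fun ω ⟨hω, hτi⟩ => hsi ?_
    exact WithTop.coe_le_coe.1 ((hAτ hω).trans hτi)

theorem MeasureTheory.Martingale.condExp_stoppingTime_ae_eq_of_le {ι : Type*} [Preorder ι]
    {ℱ : Filtration ι m0} {μ : Measure Ω} [IsFiniteMeasure μ] {Z : ι → Ω → ℝ}
    (hZ : Martingale Z ℱ μ) {σ : Ω → WithTop ι} (hσ : IsStoppingTime ℱ σ) {u T : ι}
    (hσu : ∀ ω, σ ω ≤ u) (huT : u ≤ T) :
    μ[Z u|hσ.measurableSpace] =ᵐ[μ] μ[Z T|hσ.measurableSpace] :=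
  (condExp_congr_ae (hZ.condExp_ae_eq huT).symm).trans
    (condExp_condExp_of_le (hσ.measurableSpace_le_of_le_const hσu) (ℱ.le u))

theorem MeasureTheory.setIntegral_mul_eq_of_condExp_ae_eq {μ : Measure Ω} [IsFiniteMeasure μ]
    {m : MeasurableSpace Ω} (hm : m ≤ m0) {s : Set Ω} (hs : MeasurableSet[m] s)
    {f f' g : Ω → ℝ} (hg : StronglyMeasurable[m] g)
    (hgf : IntegrableOn (fun ω => g ω * f ω) s μ) (hf : Integrable f μ)
    (hff' : μ[f|m] =ᵐ[μ] f') :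
    ∫ ω in s, g ω * f ω ∂μ = ∫ ω in s, g ω * f' ω ∂μ := by
  have hgf' : Integrable (fun ω => s.indicator g ω * f ω) μ := by
    simpa only [← indicator_mul_left] using (integrable_indicator_iff (hm s hs)).2 hgf
  simp_rw [← integral_indicator (hm s hs), indicator_mul_left,
    ← integral_condExp hm (f := fun ω => s.indicator g ω * f ω)]
  refine integral_congr_ae ?_
  filter_upwards [condExp_mul_of_stronglyMeasurable_left (hg.indicator hs) hgf' hf, hff']
    with ω h1 h2
  rw [← Pi.mul_def, h1, Pi.mul_apply, h2]

noncomputable def stoppedRatio (Zm Zb : ℝ → Ω → ℝ) (τ : Ω → ℝ) (t : ℝ) : Ω → ℝ :=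
  fun ω => Zb (min (τ ω) t) ω / Zm (min (τ ω) t) ω

section concatDensity

variable {μ : Measure Ω} {ℱ : Filtration ℝ m0} {Zm Zb : ℝ → Ω → ℝ} {τ : Ω → ℝ} {s t : ℝ}
  {ω : Ω}

lemma concatDensity_of_lt (h : t < τ ω) : concatDensity Zm Zb τ t ω = Zb t ω := if_pos h

lemma concatDensity_of_le (h : τ ω ≤ t) :
    concatDensity Zm Zb τ t ω = Zm t ω * stoppedRatio Zm Zb τ t ω := by
  rw [concatDensity, if_neg h.not_gt, stoppedRatio, min_eq_left h, mul_div_assoc]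

lemma stoppedRatio_eq_of_le (h : τ ω ≤ s) (hst : s ≤ t) :
    stoppedRatio Zm Zb τ t ω = stoppedRatio Zm Zb τ s ω := by
  simp only [stoppedRatio, min_eq_left h, min_eq_left (h.trans hst)]

lemma concatDensity_eq_piecewise :
    concatDensity Zm Zb τ t = {ω | t < τ ω}.piecewise (Zb t) (Zm t * stoppedRatio Zm Zb τ t) := by
  ext ω
  by_cases h : t < τ ω
  · rw [piecewise_eq_of_mem {ω | t < τ ω} _ _ h, concatDensity_of_lt h]
  · rw [piecewise_eq_of_notMem {ω | t < τ ω} _ _ h, concatDensity_of_le (not_lt.1 h),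
      Pi.mul_apply]

lemma concatDensity_ae_eq_mul_stoppedRatio (hZm : ∀ᵐ ω ∂μ, Zm t ω ≠ 0) :
    concatDensity Zm Zb τ t =ᵐ[μ] Zm t * stoppedRatio Zm Zb τ t := by
  filter_upwards [hZm] with ω hω
  rcases lt_or_ge t (τ ω) with h | h
  · rw [concatDensity_of_lt h, Pi.mul_apply, stoppedRatio, min_eq_right h.le,
      mul_div_cancel₀ _ hω]
  · exact concatDensity_of_le h

lemma concatDensity_zero_of_nonneg (hτ : 0 ≤ τ ω) (hZm : Zm 0 ω ≠ 0) :
    concatDensity Zm Zb τ 0 ω = Zb 0 ω := by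
  rcases hτ.lt_or_eq with h | h
  · exact concatDensity_of_lt h
  · rw [concatDensity_of_le h.ge, stoppedRatio, ← h, min_self, mul_div_cancel₀ _ hZm]

lemma concatDensity_pos (hZm : ∀ v, 0 < Zm v ω) (hZb : ∀ v, 0 < Zb v ω) :
    0 < concatDensity Zm Zb τ t ω := by
  rcases lt_or_ge t (τ ω) with h | h
  · exact concatDensity_of_lt h ▸ hZb t
  · exact concatDensity_of_le h ▸ mul_pos (hZm t) (div_pos (hZb _) (hZm _))

lemma integrable_concatDensity (hτ : MeasurableSet {ω | t < τ ω}) (hZb : Integrable (Zb t) μ)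
    (hZm : Integrable (fun ω => Zm t ω * Zb (τ ω) ω / Zm (τ ω) ω) μ) :
    Integrable (concatDensity Zm Zb τ t) μ :=
  Integrable.piecewise (s := {ω | t < τ ω}) hτ hZb.integrableOn hZm.integrableOn

lemma measurable_stoppedRatio
    (hZm : IsStronglyProgressive ℱ Zm) (hZb : IsStronglyProgressive ℱ Zb)
    (hτ : IsStoppingTime ℱ fun ω => (τ ω : WithTop ℝ)) (t : ℝ) :
    Measurable[(hτ.min_const t).measurableSpace] (stoppedRatio Zm Zb τ t) :=
  (measurable_stoppedValue hZb (hτ.min_const t)).div (measurable_stoppedValue hZm (hτ.min_const t))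

lemma stronglyMeasurable_stoppedRatio
    (hZm : IsStronglyProgressive ℱ Zm) (hZb : IsStronglyProgressive ℱ Zb)
    (hτ : IsStoppingTime ℱ fun ω => (τ ω : WithTop ℝ)) (t : ℝ) :
    StronglyMeasurable[ℱ t] (stoppedRatio Zm Zb τ t) :=
  ((measurable_stoppedRatio hZm hZb hτ t).mono
    ((hτ.min_const t).measurableSpace_le_of_le_const fun _ => min_le_right _ _)
    le_rfl).stronglyMeasurable

lemma stronglyMeasurable_concatDensity
    (hZm : IsStronglyProgressive ℱ Zm) (hZb : IsStronglyProgressive ℱ Zb)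
    (hτ : IsStoppingTime ℱ fun ω => (τ ω : WithTop ℝ)) (t : ℝ) :
    StronglyMeasurable[ℱ t] (concatDensity Zm Zb τ t) := by
  rw [concatDensity_eq_piecewise]
  exact StronglyMeasurable.piecewise (by simpa using hτ.measurableSet_gt t)
    (hZb.stronglyAdapted t)
    ((hZm.stronglyAdapted t).mul (stronglyMeasurable_stoppedRatio hZm hZb hτ t))

variable [IsFiniteMeasure μ]

lemma setIntegral_concatDensity_inter_le
    (hZm : IsStronglyProgressive ℱ Zm) (hZb : IsStronglyProgressive ℱ Zb)
    (hτ : IsStoppingTime ℱ fun ω => (τ ω : WithTop ℝ)) (hZmart : Martingale Zm ℱ μ)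
    (hst : s ≤ t) {A : Set Ω} (hA : MeasurableSet[ℱ s] A)
    (hint : Integrable (concatDensity Zm Zb τ t) μ) :
    ∫ ω in A ∩ {ω | τ ω ≤ s}, concatDensity Zm Zb τ t ω ∂μ
      = ∫ ω in A ∩ {ω | τ ω ≤ s}, concatDensity Zm Zb τ s ω ∂μ := by
  have hB : MeasurableSet[ℱ s] (A ∩ {ω | τ ω ≤ s}) :=
    hA.inter (by simpa using hτ.measurableSet_le s)
  have hCt : EqOn (concatDensity Zm Zb τ t) (fun ω => stoppedRatio Zm Zb τ s ω * Zm t ω)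
      (A ∩ {ω | τ ω ≤ s}) := fun ω hω => by
    rw [concatDensity_of_le (hω.2.trans hst), stoppedRatio_eq_of_le hω.2 hst, mul_comm]
  have hCs : EqOn (concatDensity Zm Zb τ s) (fun ω => stoppedRatio Zm Zb τ s ω * Zm s ω)
      (A ∩ {ω | τ ω ≤ s}) := fun ω hω => by
    rw [concatDensity_of_le hω.2, mul_comm]
  rw [setIntegral_congr_fun (ℱ.le s _ hB) hCt, setIntegral_congr_fun (ℱ.le s _ hB) hCs]
  exact setIntegral_mul_eq_of_condExp_ae_eq (ℱ.le s) hB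
    (stronglyMeasurable_stoppedRatio hZm hZb hτ s) (hint.integrableOn.congr_fun hCt (ℱ.le s _ hB))
    (hZmart.integrable t) (hZmart.condExp_ae_eq hst)

lemma setIntegral_concatDensity_eq_of_measurableSet_min
    (hZm : IsStronglyProgressive ℱ Zm) (hZb : IsStronglyProgressive ℱ Zb)
    (hτ : IsStoppingTime ℱ fun ω => (τ ω : WithTop ℝ)) (hZm0 : ∀ᵐ ω ∂μ, ∀ v, Zm v ω ≠ 0)
    (hZmt : Integrable (Zm t) μ) (hZbt : Integrable (Zb t) μ)
    (hosm : μ[Zm t|(hτ.min_const t).measurableSpace] =ᵐ[μ] fun ω => Zm (min (τ ω) t) ω)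
    (hosb : μ[Zb t|(hτ.min_const t).measurableSpace] =ᵐ[μ] fun ω => Zb (min (τ ω) t) ω)
    (hint : Integrable (concatDensity Zm Zb τ t) μ) {D : Set Ω}
    (hD : MeasurableSet[(hτ.min_const t).measurableSpace] D) :
    ∫ ω in D, concatDensity Zm Zb τ t ω ∂μ = ∫ ω in D, Zb t ω ∂μ := by
  have hm := (hτ.min_const t).measurableSpace_le
  have hC : concatDensity Zm Zb τ t =ᵐ[μ] fun ω => stoppedRatio Zm Zb τ t ω * Zm t ω :=
    (concatDensity_ae_eq_mul_stoppedRatio (hZm0.mono fun ω h => h t)).trans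
      (Eventually.of_forall fun ω => mul_comm _ _)
  calc ∫ ω in D, concatDensity Zm Zb τ t ω ∂μ
      = ∫ ω in D, stoppedRatio Zm Zb τ t ω * Zm t ω ∂μ := integral_congr_ae (ae_restrict_of_ae hC)
    _ = ∫ ω in D, stoppedRatio Zm Zb τ t ω * Zm (min (τ ω) t) ω ∂μ :=
        setIntegral_mul_eq_of_condExp_ae_eq hm hD
          (measurable_stoppedRatio hZm hZb hτ t).stronglyMeasurable
          (hint.congr hC).integrableOn hZmt hosm
    _ = ∫ ω in D, Zb (min (τ ω) t) ω ∂μ :=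
        setIntegral_congr_ae (hm D hD) (hZm0.mono fun ω h _ => div_mul_cancel₀ _ (h _))
    _ = ∫ ω in D, Zb t ω ∂μ := by
        rw [← setIntegral_condExp hm hZbt hD]
        exact setIntegral_congr_ae (hm D hD) (hosb.mono fun ω h _ => h.symm)

lemma condExp_concatDensity_ae_eq
    (hZm : IsStronglyProgressive ℱ Zm) (hZb : IsStronglyProgressive ℱ Zb)
    (hτ : IsStoppingTime ℱ fun ω => (τ ω : WithTop ℝ))
    (hZmart : Martingale Zm ℱ μ) (hZbmart : Martingale Zb ℱ μ) (hZm0 : ∀ᵐ ω ∂μ, ∀ v, Zm v ω ≠ 0)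
    (hosm : μ[Zm t|(hτ.min_const t).measurableSpace] =ᵐ[μ] fun ω => Zm (min (τ ω) t) ω)
    (hosb : μ[Zb t|(hτ.min_const t).measurableSpace] =ᵐ[μ] fun ω => Zb (min (τ ω) t) ω)
    (hints : Integrable (concatDensity Zm Zb τ s) μ)
    (hintt : Integrable (concatDensity Zm Zb τ t) μ) (hst : s ≤ t) :
    μ[concatDensity Zm Zb τ t|ℱ s] =ᵐ[μ] concatDensity Zm Zb τ s := by
  refine (ae_eq_condExp_of_forall_setIntegral_eq (ℱ.le s) hintt
    (fun _ _ _ => hints.integrableOn) (fun A hA _ => ?_)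
    (stronglyMeasurable_concatDensity hZm hZb hτ s).aestronglyMeasurable).symm
  have hτs : MeasurableSet[ℱ s] {ω | τ ω ≤ s} := by simpa using hτ.measurableSet_le s
  have hD : MeasurableSet[ℱ s] (A \ {ω | τ ω ≤ s}) := hA.diff hτs
  have hDmin : MeasurableSet[(hτ.min_const t).measurableSpace] (A \ {ω | τ ω ≤ s}) :=
    (hτ.min_const t).measurableSet_of_subset_const_le hD fun ω hω => by
      simpa using ⟨(not_le.1 hω.2).le, hst⟩
  rw [← integral_inter_add_sdiff (ℱ.le s _ hτs) hints.integrableOn,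
    ← integral_inter_add_sdiff (ℱ.le s _ hτs) hintt.integrableOn,
    setIntegral_concatDensity_inter_le hZm hZb hτ hZmart hst hA hintt,
    setIntegral_concatDensity_eq_of_measurableSet_min hZm hZb hτ hZm0 (hZmart.integrable t)
      (hZbmart.integrable t) hosm hosb hintt hDmin,
    ← hZbmart.setIntegral_eq hst hD,
    setIntegral_congr_fun (ℱ.le s _ hD) fun ω hω => concatDensity_of_lt (not_le.1 hω.2)]

end concatDensity

end

theorem concatDensity_martingale_general
    {Ω : Type*} {m0 : MeasurableSpace Ω} (μ : Measure Ω) [IsProbabilityMeasure μ]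
    (ℱ : Filtration ℝ m0) (T : ℝ)
    (Zm Zb : ℝ → Ω → ℝ)
    (hZm : Martingale Zm ℱ μ) (hZb : Martingale Zb ℱ μ)
    (hZmpos : ∀ᵐ ω ∂μ, ∀ u : ℝ, 0 < Zm u ω)
    (hZbpos : ∀ᵐ ω ∂μ, ∀ u : ℝ, 0 < Zb u ω)
    (hZmrc : ∀ ω : Ω, ∀ u : ℝ, ContinuousWithinAt (fun v => Zm v ω) (Set.Ici u) u)
    (hZbrc : ∀ ω : Ω, ∀ u : ℝ, ContinuousWithinAt (fun v => Zb v ω) (Set.Ici u) u)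
    (hosm : ∀ (σ : Ω → ℝ) (hσ : IsStoppingTime ℱ (fun ω => (σ ω : WithTop ℝ))), (∀ ω, σ ω ∈ Set.Icc 0 T) →
      μ[Zm T | hσ.measurableSpace] =ᵐ[μ] fun ω => Zm (σ ω) ω)
    (hosb : ∀ (σ : Ω → ℝ) (hσ : IsStoppingTime ℱ (fun ω => (σ ω : WithTop ℝ))), (∀ ω, σ ω ∈ Set.Icc 0 T) →
      μ[Zb T | hσ.measurableSpace] =ᵐ[μ] fun ω => Zb (σ ω) ω)
    (τ : Ω → ℝ) (hτ : IsStoppingTime ℱ (fun ω => (τ ω : WithTop ℝ))) (hτT : ∀ ω, τ ω ∈ Set.Icc 0 T)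
    (hint : ∀ u ∈ Set.Icc (0 : ℝ) T,
      Integrable (fun ω => Zm u ω * Zb (τ ω) ω / Zm (τ ω) ω) μ) :
    (∀ u ∈ Set.Icc (0 : ℝ) T,
        Integrable (concatDensity Zm Zb τ u) μ
          ∧ StronglyMeasurable[ℱ u] (concatDensity Zm Zb τ u))
    ∧ (∀ s u : ℝ, 0 ≤ s → s ≤ u → u ≤ T →
        μ[concatDensity Zm Zb τ u | ℱ s] =ᵐ[μ] concatDensity Zm Zb τ s)
    ∧ (∀ u ∈ Set.Icc (0 : ℝ) T, ∀ᵐ ω ∂μ, 0 < concatDensity Zm Zb τ u ω)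
    ∧ concatDensity Zm Zb τ 0 =ᵐ[μ] Zb 0 := by
  have hZmprog : IsStronglyProgressive ℱ Zm := IsProgressive.isStronglyProgressive <|
    hZm.stronglyAdapted.adapted.isProgressive_of_continuousWithinAt_Ici hZmrc
  have hZbprog : IsStronglyProgressive ℱ Zb := IsProgressive.isStronglyProgressive <|
    hZb.stronglyAdapted.adapted.isProgressive_of_continuousWithinAt_Ici hZbrc
  have hintC (u : ℝ) (hu : u ∈ Icc 0 T) : Integrable (concatDensity Zm Zb τ u) μ :=
    integrable_concatDensity (ℱ.le u _ (by simpa using hτ.measurableSet_gt u)) (hZb.integrable u)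
      (hint u hu)
  have hos (Z : ℝ → Ω → ℝ) (hZ : Martingale Z ℱ μ)
      (hosZ : ∀ (σ : Ω → ℝ) (hσ : IsStoppingTime ℱ (fun ω => (σ ω : WithTop ℝ))),
        (∀ ω, σ ω ∈ Icc 0 T) → μ[Z T | hσ.measurableSpace] =ᵐ[μ] fun ω => Z (σ ω) ω)
      (u : ℝ) (hu : u ∈ Icc 0 T) :
      μ[Z u|(hτ.min_const u).measurableSpace] =ᵐ[μ] fun ω => Z (min (τ ω) u) ω :=
    (hZ.condExp_stoppingTime_ae_eq_of_le (hτ.min_const u) (fun _ => min_le_right _ _) hu.2).trans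
      (hosZ _ (hτ.min_const u) fun ω => ⟨le_min (hτT ω).1 hu.1, (min_le_right _ _).trans hu.2⟩)
  refine ⟨fun u hu => ⟨hintC u hu, stronglyMeasurable_concatDensity hZmprog hZbprog hτ u⟩,
    fun s u hs hsu huT => ?_, fun u _ => ?_, ?_⟩
  · have hu : u ∈ Icc 0 T := ⟨hs.trans hsu, huT⟩
    exact condExp_concatDensity_ae_eq hZmprog hZbprog hτ hZm hZb
      (hZmpos.mono fun ω h v => (h v).ne') (hos Zm hZm hosm u hu) (hos Zb hZb hosb u hu)
      (hintC s ⟨hs, hsu.trans huT⟩) (hintC u hu) hsu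
  · filter_upwards [hZmpos, hZbpos] with ω hm hb using concatDensity_pos hm hb
  · filter_upwards [hZmpos] with ω h using concatDensity_zero_of_nonneg (hτT ω).1 (h 0).ne'

/-- **The concatenated density process is a strictly positive martingale.**
Let `Z^m`, `Z^b` be strictly positive, right-continuous, uniformly integrable
martingales satisfying the optional sampling identity, with suitable
integrability of `Z^m_t · Z^b_τ / Z^m_τ`.  Then for every stopping time `τ`
valued in `[0,T]`, the concatenated process
`Z^τ_t = Z^b_t·1_{[0,τ)}(t) + (Z^m_t · Z^b_τ / Z^m_τ)·1_{[τ,T]}(t)` is a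
strictly positive `(F_t)`-martingale on `[0,T]` under `P`, with
`Z^τ_0 = Z^b_0`. -/
theorem concatDensity_martingale
    {Ω : Type*} {m0 : MeasurableSpace Ω} (μ : Measure Ω) [IsProbabilityMeasure μ]
    (ℱ : Filtration ℝ m0) (T : ℝ) (hT : 0 < T)
    (Zm Zb : ℝ → Ω → ℝ)
    (hZm : Martingale Zm ℱ μ) (hZb : Martingale Zb ℱ μ)
    (hZmUI : UniformIntegrable Zm 1 μ) (hZbUI : UniformIntegrable Zb 1 μ)
    (hZmpos : ∀ᵐ ω ∂μ, ∀ u : ℝ, 0 < Zm u ω)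
    (hZbpos : ∀ᵐ ω ∂μ, ∀ u : ℝ, 0 < Zb u ω)
    (hZmrc : ∀ ω : Ω, ∀ u : ℝ, ContinuousWithinAt (fun v => Zm v ω) (Set.Ici u) u)
    (hZbrc : ∀ ω : Ω, ∀ u : ℝ, ContinuousWithinAt (fun v => Zb v ω) (Set.Ici u) u)
    (hosm : ∀ (σ : Ω → ℝ) (hσ : IsStoppingTime ℱ (fun ω => (σ ω : WithTop ℝ))), (∀ ω, σ ω ∈ Set.Icc 0 T) →
      μ[Zm T | hσ.measurableSpace] =ᵐ[μ] fun ω => Zm (σ ω) ω)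
    (hosb : ∀ (σ : Ω → ℝ) (hσ : IsStoppingTime ℱ (fun ω => (σ ω : WithTop ℝ))), (∀ ω, σ ω ∈ Set.Icc 0 T) →
      μ[Zb T | hσ.measurableSpace] =ᵐ[μ] fun ω => Zb (σ ω) ω)
    (τ : Ω → ℝ) (hτ : IsStoppingTime ℱ (fun ω => (τ ω : WithTop ℝ))) (hτT : ∀ ω, τ ω ∈ Set.Icc 0 T)
    (hint : ∀ u ∈ Set.Icc (0 : ℝ) T,
      Integrable (fun ω => Zm u ω * Zb (τ ω) ω / Zm (τ ω) ω) μ) :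
    (∀ u ∈ Set.Icc (0 : ℝ) T,
        Integrable (concatDensity Zm Zb τ u) μ
          ∧ StronglyMeasurable[ℱ u] (concatDensity Zm Zb τ u))
    ∧ (∀ s u : ℝ, 0 ≤ s → s ≤ u → u ≤ T →
        μ[concatDensity Zm Zb τ u | ℱ s] =ᵐ[μ] concatDensity Zm Zb τ s)
    ∧ (∀ u ∈ Set.Icc (0 : ℝ) T, ∀ᵐ ω ∂μ, 0 < concatDensity Zm Zb τ u ω)
    ∧ concatDensity Zm Zb τ 0 =ᵐ[μ] Zb 0 :=
  concatDensity_martingale_general μ ℱ T Zm Zb hZm hZb hZmpos hZbpos hZmrc hZbrc hosm hosb τ hτ hτT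
    hint
end

section
/- For every t ∈ [0,T) and s > 0, the defaultable put price satisfies ∂P/∂s(t,s) = Φ(d1(t,s)) − 1, P(t,s) → K·e^{−r(T−t)} as s → 0⁺, and s·∂P/∂s(t,s) + K·e^{−r(T−t)} − P(t,s) = K·e^{−(r+λ)(T−t)}·Φ(d2(t,s)). Hence the put admits exactly the same drift function G(t,s) = (λ̃(t,s) − λ)·K·e^{−(r+λ)(T−t)}·Φ(d2(t,s)) as the call with the same strike and maturity. -/
open Real Filter

/-- Standard normal density `φ`. -/
noncomputable def stdNormalPDF (x : ℝ) : ℝ := Real.exp (-(x ^ 2 / 2)) / Real.sqrt (2 * Real.pi)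

/-- Standard normal cumulative distribution function `Φ`. -/
noncomputable def stdNormalCDF (x : ℝ) : ℝ := ∫ u in Set.Iic x, stdNormalPDF u

/-- `d₁(t,s) = (log(s/K) + (r + λ + σ²/2)(T − t)) / (σ√(T − t))`. -/
noncomputable def d1 (r lam sigma K T t s : ℝ) : ℝ :=
  (Real.log (s / K) + (r + lam + sigma ^ 2 / 2) * (T - t)) / (sigma * Real.sqrt (T - t))

/-- `d₂(t,s) = d₁(t,s) − σ√(T − t)`. -/
noncomputable def d2 (r lam sigma K T t s : ℝ) : ℝ :=
  d1 r lam sigma K T t s - sigma * Real.sqrt (T - t)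

/-- Market price of a European call on a defaultable stock with constant default
intensity `λ`: `C(t,s) = s·Φ(d₁(t,s)) − K·e^{−(r+λ)(T−t)}·Φ(d₂(t,s))`. -/
noncomputable def defaultableCall (r lam sigma K T t s : ℝ) : ℝ :=
  s * stdNormalCDF (d1 r lam sigma K T t s)
    - K * Real.exp (-((r + lam) * (T - t))) * stdNormalCDF (d2 r lam sigma K T t s)

/-- Market price of a European put on a defaultable stock with constant default
intensity `λ`:
`P(t,s) = K·e^{−(r+λ)(T−t)}·Φ(−d₂(t,s)) − s·Φ(−d₁(t,s)) + K·e^{−r(T−t)}(1 − e^{−λ(T−t)})`. -/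
noncomputable def defaultablePut (r lam sigma K T t s : ℝ) : ℝ :=
  K * Real.exp (-((r + lam) * (T - t))) * stdNormalCDF (-(d2 r lam sigma K T t s))
    - s * stdNormalCDF (-(d1 r lam sigma K T t s))
    + K * Real.exp (-(r * (T - t))) * (1 - Real.exp (-(lam * (T - t))))

/-! Put–call parity `P = C − s + K e^{−r(T−t)}`, a consequence of `Φ(−x) = 1 − Φ(x)` and
`e^{−(r+λ)τ} = e^{−rτ} e^{−λτ}`, reduces every claim to the call. The call delta is `Φ(d₁)`
because the two density terms in its derivative cancel by `K e^{−(r+λ)τ} φ(d₂) = s φ(d₁)`, and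
`C(t,s) → 0` as `s → 0⁺` because `d₂ → −∞`. -/

open MeasureTheory ProbabilityTheory Topology

section IntegralIic

variable {E : Type*} [NormedAddCommGroup E] [NormedSpace ℝ E] {f : ℝ → E}

theorem hasDerivAt_integral_Iic [CompleteSpace E] (hf : Integrable f) {x : ℝ}
    (hx : ContinuousAt f x) :
    HasDerivAt (fun y => ∫ u in Set.Iic y, f u) (f x) x := by
  have h := (intervalIntegral.integral_hasDerivAt_right (a := 0) hf.intervalIntegrable
    hf.aestronglyMeasurable.stronglyMeasurableAtFilter hx).const_add (∫ u in Set.Iic 0, f u)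
  refine h.congr_of_eventuallyEq (Eventually.of_forall fun y => ?_)
  dsimp only
  rw [← intervalIntegral.integral_Iic_sub_Iic hf.integrableOn hf.integrableOn]
  abel

theorem integral_Iic_neg_of_even (hf : Integrable f) (heven : ∀ x, f (-x) = f x) (x : ℝ) :
    ∫ u in Set.Iic (-x), f u = (∫ u, f u) - ∫ u in Set.Iic x, f u := by
  have h := integral_add_compl (measurableSet_Iic (a := x)) hf
  rw [Set.compl_Iic] at h
  rw [← integral_comp_neg_Ioi, ← h, add_sub_cancel_left]
  simp only [heven]

end IntegralIic

section StdNormal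

theorem stdNormalPDF_eq_gaussianPDFReal : stdNormalPDF = gaussianPDFReal 0 1 := by
  ext x
  simp [stdNormalPDF, gaussianPDFReal, div_eq_inv_mul]

theorem stdNormalCDF_eq_cdf : stdNormalCDF = cdf (gaussianReal 0 1) := by
  ext x
  rw [cdf_eq_real, measureReal_def, gaussianReal_apply_eq_integral _ one_ne_zero,
    ENNReal.toReal_ofReal (setIntegral_nonneg measurableSet_Iic fun u _ =>
      gaussianPDFReal_nonneg _ _ u), stdNormalCDF, stdNormalPDF_eq_gaussianPDFReal]

theorem stdNormalCDF_neg (x : ℝ) : stdNormalCDF (-x) = 1 - stdNormalCDF x := by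
  rw [stdNormalCDF, stdNormalCDF, stdNormalPDF_eq_gaussianPDFReal,
    integral_Iic_neg_of_even (integrable_gaussianPDFReal 0 1) (fun u => by
      simp [gaussianPDFReal]), integral_gaussianPDFReal_eq_one 0 one_ne_zero]

theorem hasDerivAt_stdNormalCDF (x : ℝ) : HasDerivAt stdNormalCDF (stdNormalPDF x) x := by
  refine hasDerivAt_integral_Iic ?_ ?_
  · rw [stdNormalPDF_eq_gaussianPDFReal]
    exact integrable_gaussianPDFReal 0 1
  · unfold stdNormalPDF
    fun_prop

end StdNormal

section BlackScholes

variable {r lam sigma K T t : ℝ}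

theorem sigma_mul_sqrt_sub_pos (hsigma : 0 < sigma) (htT : t < T) :
    0 < sigma * Real.sqrt (T - t) :=
  mul_pos hsigma (Real.sqrt_pos.2 (sub_pos.2 htT))

theorem defaultablePut_eq_call_sub_add (s : ℝ) :
    defaultablePut r lam sigma K T t s
      = defaultableCall r lam sigma K T t s - s + K * Real.exp (-(r * (T - t))) := by
  have hdisc : Real.exp (-((r + lam) * (T - t)))
      = Real.exp (-(r * (T - t))) * Real.exp (-(lam * (T - t))) := by
    rw [← Real.exp_add]
    ring_nf
  rw [defaultablePut, defaultableCall, stdNormalCDF_neg, stdNormalCDF_neg, hdisc]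
  ring

theorem hasDerivAt_d1 (hK : 0 < K) {s : ℝ} (hs : 0 < s) :
    HasDerivAt (d1 r lam sigma K T t) (s⁻¹ / (sigma * Real.sqrt (T - t))) s := by
  have h := (((Real.hasDerivAt_log hs.ne').sub_const (Real.log K)).add_const
    ((r + lam + sigma ^ 2 / 2) * (T - t))).div_const (sigma * Real.sqrt (T - t))
  refine h.congr_of_eventuallyEq ?_
  filter_upwards [eventually_gt_nhds hs] with x hx
  rw [d1, Real.log_div hx.ne' hK.ne']

theorem hasDerivAt_d2 (hK : 0 < K) {s : ℝ} (hs : 0 < s) :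
    HasDerivAt (d2 r lam sigma K T t) (s⁻¹ / (sigma * Real.sqrt (T - t))) s :=
  (hasDerivAt_d1 hK hs).sub_const _

theorem mul_exp_mul_stdNormalPDF_d2 (hsigma : 0 < sigma) (hK : 0 < K) (htT : t < T)
    {s : ℝ} (hs : 0 < s) :
    K * Real.exp (-((r + lam) * (T - t))) * stdNormalPDF (d2 r lam sigma K T t s)
      = s * stdNormalPDF (d1 r lam sigma K T t s) := by
  have hvol := sigma_mul_sqrt_sub_pos hsigma htT
  have hd1 : d1 r lam sigma K T t s * (sigma * Real.sqrt (T - t))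
      = Real.log (s / K) + (r + lam + sigma ^ 2 / 2) * (T - t) := by
    rw [d1, div_mul_cancel₀ _ hvol.ne']
  have hvol_sq : (sigma * Real.sqrt (T - t)) ^ 2 = sigma ^ 2 * (T - t) := by
    rw [mul_pow, Real.sq_sqrt (sub_pos.2 htT).le]
  have hexponent : -((r + lam) * (T - t)) + -(d2 r lam sigma K T t s ^ 2 / 2)
      = Real.log (s / K) + -(d1 r lam sigma K T t s ^ 2 / 2) := by
    rw [d2]
    linear_combination hd1 - hvol_sq / 2
  calc K * Real.exp (-((r + lam) * (T - t))) * stdNormalPDF (d2 r lam sigma K T t s)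
      = K * Real.exp (Real.log (s / K) + -(d1 r lam sigma K T t s ^ 2 / 2))
          / Real.sqrt (2 * π) := by
        rw [← hexponent, Real.exp_add, stdNormalPDF]
        ring
    _ = s * stdNormalPDF (d1 r lam sigma K T t s) := by
        rw [Real.exp_add, Real.exp_log (div_pos hs hK), stdNormalPDF]
        field_simp

theorem hasDerivAt_defaultableCall (hsigma : 0 < sigma) (hK : 0 < K) (htT : t < T)
    {s : ℝ} (hs : 0 < s) :
    HasDerivAt (defaultableCall r lam sigma K T t)
      (stdNormalCDF (d1 r lam sigma K T t s)) s := by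
  have hd1 : HasDerivAt (d1 r lam sigma K T t) _ s := hasDerivAt_d1 hK hs
  have hd2 : HasDerivAt (d2 r lam sigma K T t) _ s := hasDerivAt_d2 hK hs
  have h := ((hasDerivAt_id' s).mul ((hasDerivAt_stdNormalCDF _).comp s hd1)).sub
    (((hasDerivAt_stdNormalCDF _).comp s hd2).const_mul (K * Real.exp (-((r + lam) * (T - t)))))
  refine h.congr_deriv ?_
  simp only [Function.comp_apply]
  linear_combination
    -(s⁻¹ / (sigma * Real.sqrt (T - t))) * mul_exp_mul_stdNormalPDF_d2 hsigma hK htT hs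

theorem tendsto_d1_atBot (hsigma : 0 < sigma) (hK : 0 < K) (htT : t < T) :
    Tendsto (d1 r lam sigma K T t) (𝓝[>] 0) atBot := by
  have hvol := sigma_mul_sqrt_sub_pos hsigma htT
  have hlog : Tendsto (fun x => Real.log (x / K)) (𝓝[>] 0) atBot := by
    refine (tendsto_atBot_add_const_right _ (-Real.log K) Real.tendsto_log_nhdsGT_zero).congr' ?_
    filter_upwards [self_mem_nhdsWithin] with x hx
    rw [Real.log_div (ne_of_gt hx) hK.ne', sub_eq_add_neg]
  exact (tendsto_atBot_add_const_right _ _ hlog).atBot_div_const hvol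

theorem tendsto_d2_atBot (hsigma : 0 < sigma) (hK : 0 < K) (htT : t < T) :
    Tendsto (d2 r lam sigma K T t) (𝓝[>] 0) atBot := by
  refine (tendsto_atBot_add_const_right _ (-(sigma * Real.sqrt (T - t)))
    (tendsto_d1_atBot (r := r) (lam := lam) hsigma hK htT)).congr fun x => ?_
  rw [d2]
  ring

theorem tendsto_defaultableCall_nhdsGT_zero (hsigma : 0 < sigma) (hK : 0 < K) (htT : t < T) :
    Tendsto (defaultableCall r lam sigma K T t) (𝓝[>] 0) (𝓝 0) := by
  have hstock : Tendsto (fun x => x * stdNormalCDF (d1 r lam sigma K T t x)) (𝓝[>] 0) (𝓝 0) := by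
    refine squeeze_zero' ?_ ?_ (tendsto_id.mono_left nhdsWithin_le_nhds)
    · filter_upwards [self_mem_nhdsWithin] with x hx
      exact mul_nonneg (le_of_lt hx) (stdNormalCDF_eq_cdf ▸ cdf_nonneg _ _)
    · filter_upwards [self_mem_nhdsWithin] with x hx
      exact mul_le_of_le_one_right (le_of_lt hx) (stdNormalCDF_eq_cdf ▸ cdf_le_one _ _)
  have hstrike : Tendsto (fun x => stdNormalCDF (d2 r lam sigma K T t x)) (𝓝[>] 0) (𝓝 0) :=
    (stdNormalCDF_eq_cdf ▸ tendsto_cdf_atBot _).comp (tendsto_d2_atBot hsigma hK htT)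
  have h := hstock.sub (hstrike.const_mul (K * Real.exp (-((r + lam) * (T - t)))))
  rw [mul_zero, sub_zero] at h
  exact h

end BlackScholes

theorem defaultablePut_drift_general
    (r lam sigma K T : ℝ) (hsigma : 0 < sigma)
    (hK : 0 < K) (lamTilde : ℝ → ℝ → ℝ)
    (t s : ℝ) (ht : t ∈ Set.Ico (0 : ℝ) T) (hs : 0 < s) :
    HasDerivAt (fun x => defaultablePut r lam sigma K T t x)
        (stdNormalCDF (d1 r lam sigma K T t s) - 1) s
    ∧ Tendsto (fun x => defaultablePut r lam sigma K T t x)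
        (nhdsWithin 0 (Set.Ioi 0)) (nhds (K * Real.exp (-(r * (T - t)))))
    ∧ s * (stdNormalCDF (d1 r lam sigma K T t s) - 1) + K * Real.exp (-(r * (T - t)))
          - defaultablePut r lam sigma K T t s
        = K * Real.exp (-((r + lam) * (T - t))) * stdNormalCDF (d2 r lam sigma K T t s)
    ∧ (lamTilde t s - lam)
          * (s * (stdNormalCDF (d1 r lam sigma K T t s) - 1) + K * Real.exp (-(r * (T - t)))
              - defaultablePut r lam sigma K T t s)
        = (lamTilde t s - lam)
          * (s * stdNormalCDF (d1 r lam sigma K T t s) + 0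
              - defaultableCall r lam sigma K T t s) := by
  have htT : t < T := ht.2
  have hparity : (fun x => defaultablePut r lam sigma K T t x)
      = fun x => defaultableCall r lam sigma K T t x - x + K * Real.exp (-(r * (T - t))) :=
    funext defaultablePut_eq_call_sub_add
  have hgap : s * (stdNormalCDF (d1 r lam sigma K T t s) - 1) + K * Real.exp (-(r * (T - t)))
      - defaultablePut r lam sigma K T t s
      = K * Real.exp (-((r + lam) * (T - t))) * stdNormalCDF (d2 r lam sigma K T t s) := by
    rw [defaultablePut_eq_call_sub_add, defaultableCall]
    ring
  refine ⟨?_, ?_, hgap, ?_⟩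
  · rw [hparity]
    exact ((hasDerivAt_defaultableCall hsigma hK htT hs).sub (hasDerivAt_id s)).add_const _
  · rw [hparity]
    simpa using ((tendsto_defaultableCall_nhdsGT_zero hsigma hK htT).sub
      (tendsto_id.mono_left nhdsWithin_le_nhds)).add_const (K * Real.exp (-(r * (T - t))))
  · rw [hgap, defaultableCall]
    ring

/-- **Drift function of the defaultable put.**
For `t ∈ [0,T)` and `s > 0`: `∂P/∂s(t,s) = Φ(d₁(t,s)) − 1`,
`P(t,s) → K·e^{−r(T−t)}` as `s → 0⁺`, and
`s·∂P/∂s(t,s) + K·e^{−r(T−t)} − P(t,s) = K·e^{−(r+λ)(T−t)}·Φ(d₂(t,s))`.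
Hence the put admits exactly the same drift function
`G(t,s) = (λ̃(t,s) − λ)·K·e^{−(r+λ)(T−t)}·Φ(d₂(t,s))` as the call with the same
strike and maturity. -/
theorem defaultablePut_drift
    (r lam sigma K T : ℝ) (hr : 0 ≤ r) (hlam : 0 ≤ lam) (hsigma : 0 < sigma)
    (hK : 0 < K) (hT : 0 < T) (lamTilde : ℝ → ℝ → ℝ)
    (t s : ℝ) (ht : t ∈ Set.Ico (0 : ℝ) T) (hs : 0 < s) :
    HasDerivAt (fun x => defaultablePut r lam sigma K T t x)
        (stdNormalCDF (d1 r lam sigma K T t s) - 1) s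
    ∧ Tendsto (fun x => defaultablePut r lam sigma K T t x)
        (nhdsWithin 0 (Set.Ioi 0)) (nhds (K * Real.exp (-(r * (T - t)))))
    ∧ s * (stdNormalCDF (d1 r lam sigma K T t s) - 1) + K * Real.exp (-(r * (T - t)))
          - defaultablePut r lam sigma K T t s
        = K * Real.exp (-((r + lam) * (T - t))) * stdNormalCDF (d2 r lam sigma K T t s)
    ∧ (lamTilde t s - lam)
          * (s * (stdNormalCDF (d1 r lam sigma K T t s) - 1) + K * Real.exp (-(r * (T - t)))
              - defaultablePut r lam sigma K T t s)
        = (lamTilde t s - lam)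
          * (s * stdNormalCDF (d1 r lam sigma K T t s) + 0
              - defaultableCall r lam sigma K T t s) :=
  defaultablePut_drift_general r lam sigma K T hsigma hK lamTilde t s ht hs
end
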